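/- Let g be a diffeomorphism which, in local coordinates on a neighborhood V of a hyperbolic fixed point p₁, coincides with the hyperbolic linear map Dg(p₁) with invariant splitting E^s_{p₁} ⊕ E^u_{p₁} of ℝ^{2n}. Set V^u_k = V ∩ g(V) ∩ … ∩ g^k(V) and V^s_k = V ∩ g^{-1}(V) ∩ … ∩ g^{-k}(V), and for vectors v, w and subspaces E define ang(v,w) = |tan(arccos(⟨v,w⟩/(‖v‖‖w‖)))|, ang(v,E) = min over unit vectors w ∈ E of ang(v,w). Then there exist positive constants K₆ and K₇ such that: (1) if z ∈ V^u_k, v ∈ ℝ^{2n} \ E^u_{p₁}, and ang(Dg^{-k}(z)(v), E^u_{p₁}) ≥ 1, then K₆ ‖Dg_{p₁}^k|E^s‖^{-1} |v| min{ang(v, E^u_{p₁}), 1} ≤ |Dg^{-k}(z)(v)| ≤ K₇ ‖Dg_{p₁}^{-k}|E^s‖ |v|; (2) if z ∈ V^s_k, v ∈ ℝ^{2n} \ E^s_{p₁}, and ang(Dg^k(z)(v), E^s_{p₁}) ≥ 1, then K₆ ‖Dg_{p₁}^{-k}|E^u‖^{-1} |v| min{ang(v, E^s_{p₁}), 1}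 ≤ |Dg^k(z)(v)| ≤ K₇ ‖Dg_{p₁}^k|E^u‖ |v|. -/

import Mathlib

/- Core definitions: C¹ diffeomorphisms of a compact d-dimensional manifold,
hyperbolic periodic points, invariant manifolds, homoclinic classes, dominated
splittings, symbolic extensions, entropies, etc. -/

open scoped Manifold Topology ENNReal
open Filter Set MeasureTheory

/-- Euclidean model space ℝ^d. -/
abbrev EucE (d : ℕ) := EuclideanSpace ℝ (Fin d)

/-- The space of C¹ diffeomorphisms of a manifold `M` modelled on `ℝ^d`. -/
abbrev Diff1 (d : ℕ) (M : Type*) [TopologicalSpace M] [ChartedSpace (EucE d) M] :=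
  Diffeomorph (𝓡 d) (𝓡 d) M M 1

/-- The derivative of `f` at `x`, read in the preferred charts (which identify all
tangent spaces with the model space `ℝ^d`). -/
noncomputable def deriv1 (d : ℕ) {M : Type*} [TopologicalSpace M] [ChartedSpace (EucE d) M]
    (f : M → M) (x : M) : EucE d →L[ℝ] EucE d :=
  mfderiv (𝓡 d) (𝓡 d) f x

/-- The derivative of the `n`-th iterate of `f` at `x`. -/
noncomputable def derivIter (d : ℕ) {M : Type*} [TopologicalSpace M] [ChartedSpace (EucE d) M]
    (f : M → M) (n : ℕ) (x : M) : EucE d →L[ℝ] EucE d :=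
  deriv1 d (f^[n]) x

section Core

variable (d : ℕ) {M : Type*} [MetricSpace M] [ChartedSpace (EucE d) M]

/-- The C¹ topology on `Diff1 d M`: the topology induced by uniform convergence of the maps,
their derivatives (in charts), their inverses and the derivatives of the inverses. -/
noncomputable instance Diff1.instTopologicalSpace : TopologicalSpace (Diff1 d M) :=
  TopologicalSpace.induced
    (fun f : Diff1 d M =>
      (UniformFun.ofFun ⇑f,
       UniformFun.ofFun (fun x => deriv1 d (⇑f) x),
       UniformFun.ofFun ⇑f.symm,
       UniformFun.ofFun (fun x => deriv1 d (⇑f.symm) x)))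
    inferInstance

/-- A C¹ distance between two diffeomorphisms: uniform distance of the maps, their
derivatives (in charts), and similarly for the inverses. -/
noncomputable def c1Dist (f g : Diff1 d M) : ℝ :=
  (⨆ x : M, dist (f x) (g x)) + (⨆ x : M, dist (deriv1 d (⇑f) x) (deriv1 d (⇑g) x)) +
    (⨆ x : M, dist (f.symm x) (g.symm x)) +
    (⨆ x : M, dist (deriv1 d (⇑f.symm) x) (deriv1 d (⇑g.symm) x))

/-- The `n`-th iterate of a diffeomorphism, for `n : ℤ`. -/
noncomputable def zIter (f : Diff1 d M) (n : ℤ) : M → M :=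
  if 0 ≤ n then (⇑f)^[n.toNat] else (⇑f.symm)^[(-n).toNat]

/-- The full orbit `{fⁿ(x) : n ∈ ℤ}` of a point. -/
noncomputable def orbitZ (f : Diff1 d M) (x : M) : Set M :=
  Set.range fun n : ℤ => zIter d f n x

/-- The power `f^t` of a diffeomorphism as a diffeomorphism. -/
noncomputable def d1pow (f : Diff1 d M) : ℕ → Diff1 d M
  | 0 => Diffeomorph.refl (𝓡 d) M 1
  | n + 1 => (d1pow f n).trans f

/-- The space of vectors contracted by the derivatives of the iterates of `f` at `x`.
At a point `x` of the stable manifold of a hyperbolic periodic orbit this is the tangent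
space of the stable manifold at `x`; similarly, `stableSpace d (⇑f.symm) x` is the tangent
space of the unstable manifold. -/
noncomputable def stableSpace {M : Type*} [TopologicalSpace M] [ChartedSpace (EucE d) M]
    (f : M → M) (x : M) : Submodule ℝ (EucE d) where
  carrier := {v | Tendsto (fun n => derivIter d f n x v) atTop (𝓝 0)}
  add_mem' := by
    intro a b ha hb
    simpa [map_add] using ha.add hb
  zero_mem' := by simp [tendsto_const_nhds]
  smul_mem' := by
    intro c v hv
    simpa [_root_.map_smul] using hv.const_smul c

/-- The index of a (hyperbolic periodic) point: the dimension of its stable space. -/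
noncomputable def stableIndex {M : Type*} [TopologicalSpace M] [ChartedSpace (EucE d) M]
    (f : M → M) (p : M) : ℕ :=
  Module.finrank ℝ (stableSpace d f p)

/-- A continuous linear self-map of `ℝ^d` is hyperbolic with splitting `Es ⊕ Eu` if the
splitting is invariant, `Es` is uniformly contracted and `Eu` uniformly expanded.  (This is
equivalent to: no eigenvalue on the unit circle, with `Es`, `Eu` the stable/unstable spaces.) -/
def HyperbolicSplitting {d : ℕ} (A : EucE d →L[ℝ] EucE d) (Es Eu : Submodule ℝ (EucE d)) : Prop :=
  IsCompl Es Eu ∧ (∀ v ∈ Es, A v ∈ Es) ∧ (∀ v ∈ Eu, A v ∈ Eu) ∧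
    ∃ C > (0 : ℝ), ∃ κ ∈ Set.Ioo (0 : ℝ) 1,
      (∀ n : ℕ, ∀ v ∈ Es, ‖(A ^ n) v‖ ≤ C * κ ^ n * ‖v‖) ∧
      (∀ n : ℕ, ∀ v ∈ Eu, ‖v‖ ≤ C * κ ^ n * ‖(A ^ n) v‖)

/-- `p` is a hyperbolic periodic point of `f`: it is periodic with some period `τ`, and the
derivative of `f^τ` at `p` is a hyperbolic linear map. -/
def IsHyperbolicPeriodicPt {M : Type*} [TopologicalSpace M] [ChartedSpace (EucE d) M]
    (f : M → M) (p : M) : Prop :=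
  ∃ τ > 0, f^[τ] p = p ∧ ∃ Es Eu, HyperbolicSplitting (derivIter d f τ p) Es Eu

/-- The stable set (stable manifold) of the orbit of a periodic point `p`. -/
noncomputable def stableSetOrbit (f : Diff1 d M) (p : M) : Set M :=
  {x | ∃ q ∈ orbitZ d f p, Tendsto (fun n => dist ((⇑f)^[n] x) ((⇑f)^[n] q)) atTop (𝓝 0)}

/-- The unstable set (unstable manifold) of the orbit of a periodic point `p`. -/
noncomputable def unstableSetOrbit (f : Diff1 d M) (p : M) : Set M :=
  {x | ∃ q ∈ orbitZ d f p, Tendsto (fun n => dist ((⇑f.symm)^[n] x) ((⇑f.symm)^[n] q)) atTop (𝓝 0)}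

/-- At a point `x` lying on a stable and an unstable manifold, the intersection is
transverse if the tangent spaces of those manifolds span the whole tangent space. -/
def TransverseAt (f : Diff1 d M) (x : M) : Prop :=
  stableSpace d (⇑f) x ⊔ stableSpace d (⇑f.symm) x = ⊤

/-- The homoclinic class of `p`: the closure of the set of transverse intersection points
of the stable and unstable manifolds of the orbit of `p`. -/
noncomputable def homoclinicClass (f : Diff1 d M) (p : M) : Set M :=
  closure {x | x ∈ stableSetOrbit d f p ∧ x ∈ unstableSetOrbit d f p ∧ TransverseAt d f x}

/-- Two (hyperbolic periodic) points are homoclinically related if the stable manifold of each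
meets the unstable manifold of the other transversally. -/
def HomoclinicallyRelated (f : Diff1 d M) (p q : M) : Prop :=
  (∃ x, x ∈ stableSetOrbit d f p ∧ x ∈ unstableSetOrbit d f q ∧ TransverseAt d f x) ∧
  (∃ x, x ∈ stableSetOrbit d f q ∧ x ∈ unstableSetOrbit d f p ∧ TransverseAt d f x)

/-- `f` has a homoclinic tangency associated to the hyperbolic periodic point `p`:
some intersection point of the stable and unstable manifolds of the orbit of `p`
is non-transverse. -/
def HasHomoclinicTangencyAt (f : Diff1 d M) (p : M) : Prop :=
  IsHyperbolicPeriodicPt d (⇑f) p ∧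
    ∃ x, x ∈ stableSetOrbit d f p ∧ x ∈ unstableSetOrbit d f p ∧ ¬ TransverseAt d f x

/-- `f` exhibits a homoclinic tangency. -/
def HasHomoclinicTangency (f : Diff1 d M) : Prop :=
  ∃ p, HasHomoclinicTangencyAt d f p

/-- Kupka–Smale diffeomorphism: every periodic point is hyperbolic and invariant manifolds
of periodic orbits meet transversally. -/
def KupkaSmale (f : Diff1 d M) : Prop :=
  (∀ p : M, (∃ τ > 0, (⇑f)^[τ] p = p) → IsHyperbolicPeriodicPt d (⇑f) p) ∧
  (∀ p q : M, IsHyperbolicPeriodicPt d (⇑f) p → IsHyperbolicPeriodicPt d (⇑f) q →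
    ∀ x, x ∈ stableSetOrbit d f p → x ∈ unstableSetOrbit d f q → TransverseAt d f x)

/-- A dominated splitting `V 0 ⊕ … ⊕ V (k-1)` of the tangent bundle over `Λ`. -/
def IsDominatedSplitting (f : Diff1 d M) (Λ : Set M) {k : ℕ}
    (V : Fin k → M → Submodule ℝ (EucE d)) : Prop :=
  (∀ x ∈ Λ, (⨆ i, V i x) = ⊤) ∧
  (∀ x ∈ Λ, ∑ i, Module.finrank ℝ (V i x) = d) ∧
  (∀ x ∈ Λ, ∀ i, ∀ v ∈ V i x, deriv1 d (⇑f) x v ∈ V i (f x)) ∧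
  ∃ C > (0 : ℝ), ∃ lam ∈ Set.Ioo (0 : ℝ) 1, ∀ x ∈ Λ, ∀ n : ℕ, ∀ i j : Fin k, i < j →
    ∀ u ∈ V i x, ∀ w ∈ V j ((⇑f)^[n] x),
      ‖derivIter d (⇑f) n x u‖ * ‖derivIter d (⇑f.symm) n ((⇑f)^[n] x) w‖ ≤
        C * lam ^ n * (‖u‖ * ‖w‖)

/-- The smallest index of a hyperbolic periodic point of `f` in `Λ`. -/
noncomputable def minIndex (f : Diff1 d M) (Λ : Set M) : ℕ :=
  sInf {i | ∃ q ∈ Λ, IsHyperbolicPeriodicPt d (⇑f) q ∧ stableIndex d (⇑f) q = i}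

/-- The greatest index of a hyperbolic periodic point of `f` in `Λ`. -/
noncomputable def maxIndex (f : Diff1 d M) (Λ : Set M) : ℕ :=
  sSup {i | ∃ q ∈ Λ, IsHyperbolicPeriodicPt d (⇑f) q ∧ stableIndex d (⇑f) q = i}

/-- A good splitting over `Λ`: a dominated splitting `E ⊕ F₁ ⊕ … ⊕ F_l ⊕ G` where
`dim E = s` (smallest index in `Λ`), `dim G = d - u` (`u` the greatest index in `Λ`), and all
middle bundles are one-dimensional. -/
def IsGoodSplitting (f : Diff1 d M) (Λ : Set M) {l : ℕ}
    (V : Fin (l + 2) → M → Submodule ℝ (EucE d)) : Prop :=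
  IsDominatedSplitting d f Λ V ∧
  (∀ x ∈ Λ, Module.finrank ℝ (V 0 x) = minIndex d f Λ) ∧
  (∀ x ∈ Λ, Module.finrank ℝ (V (Fin.last (l + 1)) x) = d - maxIndex d f Λ) ∧
  (∀ j : Fin (l + 2), j ≠ 0 → j ≠ Fin.last (l + 1) →
    ∀ x ∈ Λ, Module.finrank ℝ (V j x) = 1)

/-- `Λ` has a good decomposition for `f`. -/
def HasGoodDecomposition (f : Diff1 d M) (Λ : Set M) : Prop :=
  ∃ (l : ℕ) (V : Fin (l + 2) → M → Submodule ℝ (EucE d)), IsGoodSplitting d f Λ V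

/-- `Λ` is partially hyperbolic: it admits a dominated splitting whose first bundle is
uniformly contracted and whose last bundle is uniformly expanded. -/
def IsPartiallyHyperbolicOn (f : Diff1 d M) (Λ : Set M) : Prop :=
  ∃ (l : ℕ) (V : Fin (l + 2) → M → Submodule ℝ (EucE d)),
    IsDominatedSplitting d f Λ V ∧
    ∃ C > (0 : ℝ), ∃ κ ∈ Set.Ioo (0 : ℝ) 1, ∀ x ∈ Λ, ∀ n : ℕ,
      (∀ v ∈ V 0 x, ‖derivIter d (⇑f) n x v‖ ≤ C * κ ^ n * ‖v‖) ∧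
      (∀ v ∈ V (Fin.last (l + 1)) x, ‖derivIter d (⇑f.symm) n x v‖ ≤ C * κ ^ n * ‖v‖)

/-- A hyperbolic structure on `Λ`: an invariant splitting `Es ⊕ Eu` with uniform
contraction on `Es` (forwards) and on `Eu` (backwards). -/
def IsHyperbolicSetWith (f : Diff1 d M) (Λ : Set M)
    (Es Eu : M → Submodule ℝ (EucE d)) : Prop :=
  (∀ x ∈ Λ, IsCompl (Es x) (Eu x)) ∧
  (∀ x ∈ Λ, (∀ v ∈ Es x, deriv1 d (⇑f) x v ∈ Es (f x)) ∧
            (∀ v ∈ Eu x, deriv1 d (⇑f) x v ∈ Eu (f x))) ∧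
  ∃ C > (0 : ℝ), ∃ κ ∈ Set.Ioo (0 : ℝ) 1, ∀ x ∈ Λ, ∀ n : ℕ,
    (∀ v ∈ Es x, ‖derivIter d (⇑f) n x v‖ ≤ C * κ ^ n * ‖v‖) ∧
    (∀ v ∈ Eu x, ‖derivIter d (⇑f.symm) n x v‖ ≤ C * κ ^ n * ‖v‖)

/-- `Λ` is a hyperbolic set for `f`. -/
def IsHyperbolicSet (f : Diff1 d M) (Λ : Set M) : Prop :=
  ∃ Es Eu, IsHyperbolicSetWith d f Λ Es Eu

/-- `Λ` is an isolated invariant set: `Λ = ⋂_{n ∈ ℤ} fⁿ(U)` for some neighborhood `U`. -/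
def IsIsolatedSet (f : Diff1 d M) (Λ : Set M) : Prop :=
  ∃ U : Set M, IsOpen U ∧ Λ ⊆ U ∧ Λ = ⋂ n : ℤ, zIter d f n '' U

/-- A hyperbolic basic set: compact, invariant, hyperbolic, isolated, with a dense orbit. -/
def IsHyperbolicBasicSet (f : Diff1 d M) (Λ : Set M) : Prop :=
  IsCompact Λ ∧ (⇑f) '' Λ = Λ ∧ IsHyperbolicSet d f Λ ∧ IsIsolatedSet d f Λ ∧
    ∃ x ∈ Λ, Λ ⊆ closure (orbitZ d f x)

/-- A periodic hyperbolic basic set: a finite union `⋃_{0 ≤ j < t} f^j(Λ̄)` where `Λ̄`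
(the base set) is a hyperbolic basic set of `f^t`. -/
def IsPeriodicHyperbolicBasicSet (f : Diff1 d M) (Λ : Set M) : Prop :=
  ∃ t > 0, ∃ Λb : Set M, IsHyperbolicBasicSet d (d1pow d f t) Λb ∧
    Λ = ⋃ j ∈ Finset.range t, (⇑f)^[j] '' Λb

/-- The set of Lyapunov exponents of `f` at a (periodic) point `p`. -/
noncomputable def lyapExps {M : Type*} [TopologicalSpace M] [ChartedSpace (EucE d) M]
    (f : M → M) (p : M) : Set ℝ :=
  {l | ∃ v : EucE d, v ≠ 0 ∧
    Tendsto (fun n : ℕ => Real.log ‖derivIter d f n p v‖ / n) atTop (𝓝 l)}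

/-- The smallest positive Lyapunov exponent at `p`. -/
noncomputable def chiPlus {M : Type*} [TopologicalSpace M] [ChartedSpace (EucE d) M]
    (f : M → M) (p : M) : ℝ :=
  sInf {l | l ∈ lyapExps d f p ∧ 0 < l}

/-- The biggest negative Lyapunov exponent at `p`. -/
noncomputable def chiMinus {M : Type*} [TopologicalSpace M] [ChartedSpace (EucE d) M]
    (f : M → M) (p : M) : ℝ :=
  sSup {l | l ∈ lyapExps d f p ∧ l < 0}

/-- `χ(p,f) = min {χ⁺(p,f), -χ⁻(p,f)}`. -/
noncomputable def chi {M : Type*} [TopologicalSpace M] [ChartedSpace (EucE d) M]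
    (f : M → M) (p : M) : ℝ :=
  min (chiPlus d f p) (-(chiMinus d f p))

end Core

/-! ### Symbolic dynamics and entropies -/

/-- The shift map on bi-infinite sequences. -/
def shiftMap {A : Type*} : (ℤ → A) → (ℤ → A) := fun x n => x (n + 1)

/-- A subshift: a closed shift-invariant subset of a full shift on finitely many symbols. -/
def IsSubshift {k : ℕ} (N : Set (ℤ → Fin k)) : Prop :=
  IsClosed N ∧ shiftMap '' N = N

/-- `f` restricted to the invariant set `Λ` has a symbolic extension: there is a subshift
`(N, σ)` and a continuous surjection `π : N → Λ` with `π ∘ σ = f ∘ π`. -/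
def HasSymbolicExtensionOn {M : Type*} [TopologicalSpace M] (f : M → M) (Λ : Set M) : Prop :=
  ∃ (k : ℕ) (N : Set (ℤ → Fin k)) (π : (ℤ → Fin k) → M),
    IsSubshift N ∧ ContinuousOn π N ∧ π '' N = Λ ∧ ∀ x ∈ N, π (shiftMap x) = f (π x)

/-- The entropy `H(μ, α ∨ T⁻¹α ∨ … ∨ T⁻⁽ⁿ⁻¹⁾α)` of the `n`-th dynamical refinement of the
finite measurable partition of `X` induced by `α : X → Fin k`. -/
noncomputable def cylinderEntropy {X : Type*} [MeasurableSpace X] (μ : Measure X) (T : X → X)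
    {k : ℕ} (α : X → Fin k) (n : ℕ) : ℝ :=
  ∑ w : Fin n → Fin k, Real.negMulLog (μ {x | ∀ i : Fin n, α (T^[(i : ℕ)] x) = w i}).toReal

/-- The measure-theoretic (Kolmogorov–Sinai) entropy of `T` with respect to `μ`:
the supremum over finite measurable partitions of the asymptotic average entropy of
dynamical refinements. -/
noncomputable def mEntropy {X : Type*} [MeasurableSpace X] (μ : Measure X) (T : X → X) : EReal :=
  ⨆ (k : ℕ) (α : X → Fin k) (_ : Measurable α),
    Filter.atTop.liminf fun n : ℕ => ((cylinderEntropy μ T α n / n : ℝ) : EReal)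

/-- `f` restricted to `Λ` has a principal symbolic extension: a symbolic extension
`π : N → Λ` such that `h_{π_*μ}(f) = h_μ(σ)` for every shift-invariant probability
measure `μ` carried by `N`. -/
def HasPrincipalSymbolicExtensionOn {M : Type*} [TopologicalSpace M] [MeasurableSpace M]
    (f : M → M) (Λ : Set M) : Prop :=
  ∃ (k : ℕ) (N : Set (ℤ → Fin k)) (π : (ℤ → Fin k) → M),
    IsSubshift N ∧ ContinuousOn π N ∧ π '' N = Λ ∧ (∀ x ∈ N, π (shiftMap x) = f (π x)) ∧
    ∀ μ : Measure (ℤ → Fin k), IsProbabilityMeasure μ → μ.map shiftMap = μ → μ N = 1 →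
      mEntropy (μ.map π) f = mEntropy μ shiftMap

/-- The periodic measure of a periodic point: the uniform probability on its orbit. -/
noncomputable def periodicMeasure {M : Type*} [MeasurableSpace M] (f : M → M) (p : M) :
    Measure M :=
  ((Function.minimalPeriod f p : ℝ≥0∞))⁻¹ •
    ∑ i ∈ Finset.range (Function.minimalPeriod f p), Measure.dirac (f^[i] p)

section Dyn

variable (d : ℕ) {M : Type*} [MetricSpace M] [ChartedSpace (EucE d) M]
  [MeasurableSpace M] [BorelSpace M]

/-- The items (a), (b), (c) of property `S_{n,·}` for the hyperbolic periodic point `pt`: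
there is a zero-dimensional periodic hyperbolic basic set `Λ ⊆ H(pt,f)` with the same index
as `pt` carrying an ergodic measure of entropy `> χ(pt,f) - 1/n`, all of whose ergodic
measures are `1/n`-close to `μ_pt` and all of whose hyperbolic periodic points `q` satisfy
`χ(q,f) > χ(pt,f) - 1/n`. -/
def SItems (f : Diff1 d M) (n : ℕ) (pt : M) : Prop :=
  ∃ Λ : Set M, IsPeriodicHyperbolicBasicSet d f Λ ∧ IsTotallyDisconnected Λ ∧
    Λ ⊆ homoclinicClass d f pt ∧
    (∃ Es Eu, IsHyperbolicSetWith d f Λ Es Eu ∧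
      ∀ x ∈ Λ, Module.finrank ℝ (Es x) = stableIndex d (⇑f) pt) ∧
    (∃ ν : Measure M, IsProbabilityMeasure ν ∧ Ergodic (⇑f) ν ∧ ν Λ = 1 ∧
      ((chi d (⇑f) pt - 1 / n : ℝ) : EReal) < mEntropy ν (⇑f)) ∧
    (∀ μ : Measure M, IsProbabilityMeasure μ → Ergodic (⇑f) μ → μ Λ = 1 →
      levyProkhorovDist μ (periodicMeasure (⇑f) pt) < 1 / n) ∧
    (∀ q ∈ Λ, IsHyperbolicPeriodicPt d (⇑f) q → chi d (⇑f) pt - 1 / n < chi d (⇑f) q)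

/-- Property `S_{n,p}`: `p` is a hyperbolic periodic point of `f` and the items (a), (b), (c)
hold for every hyperbolic periodic point of period at most `n` homoclinically related to `p`. -/
def PropertyS (f : Diff1 d M) (n : ℕ) (p : M) : Prop :=
  IsHyperbolicPeriodicPt d (⇑f) p ∧
    ∀ pt : M, IsHyperbolicPeriodicPt d (⇑f) pt → Function.minimalPeriod (⇑f) pt ≤ n →
      HomoclinicallyRelated d f p pt → SItems d f n pt

/-- The `ε`-set of `x`: points whose full orbit `ε`-shadows that of `x`. -/
noncomputable def epsSet (f : Diff1 d M) (ε : ℝ) (x : M) : Set M :=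
  {y | ∀ n : ℤ, dist (zIter d f n x) (zIter d f n y) ≤ ε}

/-- `f` is asymptotically h-expansive: `sup_x h(f, Φ_ε(x)) → 0` as `ε → 0`. -/
noncomputable def AsympHExpansive (f : Diff1 d M) : Prop :=
  Tendsto (fun ε : ℝ => ⨆ x : M, Dynamics.coverEntropy (⇑f) (epsSet d f ε x))
    (𝓝[>] (0 : ℝ)) (𝓝 (0 : EReal))

end Dyn

/-- `R` is residual in `U`: it contains a countable intersection of open sets each of which
is dense in `U`, intersected with `U`. -/
def ResidualIn {X : Type*} [TopologicalSpace X] (U R : Set X) : Prop :=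
  ∃ S : ℕ → Set X, (∀ i, IsOpen (S i)) ∧ (∀ i, U ⊆ closure (S i ∩ U)) ∧
    (U ∩ ⋂ i, S i) ⊆ R

/-- The operator norm of `A` restricted to a subspace `S`. -/
noncomputable def subNorm {d : ℕ} (A : EucE d →L[ℝ] EucE d) (S : Submodule ℝ (EucE d)) : ℝ :=
  ‖A.comp S.subtypeL‖

/-- The "angle" `|tan(arccos(⟨v,w⟩ / (‖v‖‖w‖)))|` between two vectors. -/
noncomputable def ang {d : ℕ} (v w : EucE d) : ℝ :=
  |Real.tan (Real.arccos ((inner ℝ v w : ℝ) / (‖v‖ * ‖w‖)))|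

/-- The angle between a vector and a subspace: the infimum of angles with unit vectors
of the subspace. -/
noncomputable def angS {d : ℕ} (v : EucE d) (S : Submodule ℝ (EucE d)) : ℝ :=
  sInf {a | ∃ w ∈ S, ‖w‖ = 1 ∧ a = ang v w}


/-!
On the neighbourhoods in question the iterates of `g` and `g⁻¹` coincide with `A ^ k` and
`A⁻¹ ^ k`, so everything reduces to the linear algebra of the hyperbolic splitting, whose
projections have bounded norm.

Lower bound: write `A⁻ᵏ v = x + y` along `Eˢ ⊕ Eᵘ`. Then `v - Aᵏ y = Aᵏ x` with `Aᵏ y ∈ Eᵘ`, and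
the angle of a vector with a subspace is controlled by its distance to it:
`‖v‖ min(ang(v, Eᵘ), 1) ≤ √2 ‖v - u‖` for every `u ∈ Eᵘ`. Hence
`‖v‖ min(ang(v, Eᵘ), 1) ≤ √2 ‖Aᵏ|Eˢ‖ ‖x‖ ≲ ‖Aᵏ|Eˢ‖ ‖A⁻ᵏ v‖`.

Upper bound: `A⁻ᵏ` contracts `Eᵘ` uniformly and, as `Eˢ ≠ 0` when `v ∉ Eᵘ`, its norm on `Eˢ` is at
least `1 / C`; so the stable part dominates.

Part (2) is part (1) for `A⁻¹`, which is hyperbolic with the roles of `Eˢ` and `Eᵘ` exchanged.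
-/

section Decomposition

variable {E : Type*} [NormedAddCommGroup E] [NormedSpace ℝ E] [FiniteDimensional ℝ E]

theorem exists_bounded_decomposition_of_isCompl {Es Eu : Submodule ℝ E} (h : IsCompl Es Eu) :
    ∃ c > 0, ∀ v : E, ∃ x ∈ Es, ∃ y ∈ Eu, x + y = v ∧ ‖x‖ ≤ c * ‖v‖ ∧ ‖y‖ ≤ c * ‖v‖ := by
  set P : E →L[ℝ] E := LinearMap.toContinuousLinearMap (Es.projection Eu h)
  have hPv : ∀ v, ‖P v‖ ≤ ‖P‖ * ‖v‖ := P.le_opNorm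
  refine ⟨1 + ‖P‖, by positivity, fun v => ⟨P v, Es.projection_apply_mem h v, v - P v, ?_,
    add_sub_cancel _ _, ?_, ?_⟩⟩
  · change v - Es.projection Eu h v ∈ Eu
    rw [← Submodule.projection_eq_self_sub_projection h]
    exact Eu.projection_apply_mem h.symm v
  · nlinarith [hPv v, norm_nonneg v]
  · nlinarith [hPv v, norm_sub_le v (P v)]

end Decomposition

section ContinuousLinearEquiv

variable {R E : Type*} [Semiring R] [AddCommMonoid E] [Module R E] [TopologicalSpace E]

theorem ContinuousLinearMap.pow_apply_mem {B : E →L[R] E} {S : Submodule R E}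
    (h : ∀ v ∈ S, B v ∈ S) (k : ℕ) {v : E} (hv : v ∈ S) : (B ^ k) v ∈ S := by
  rw [FunLike.coe_pow_eq_iterate]
  exact Set.MapsTo.iterate (f := B) (s := S) h k hv

theorem ContinuousLinearEquiv.pow_apply_symm_pow_apply (A : E ≃L[R] E) (k : ℕ) (v : E) :
    ((A : E →L[R] E) ^ k) (((A.symm : E →L[R] E) ^ k) v) = v := by
  simp only [FunLike.coe_pow_eq_iterate, ContinuousLinearEquiv.coe_coe]
  exact (Function.LeftInverse.iterate A.apply_symm_apply k) v

end ContinuousLinearEquiv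

theorem ContinuousLinearEquiv.symm_apply_mem_of_forall_apply_mem {K E : Type*} [Field K]
    [AddCommGroup E] [Module K E] [TopologicalSpace E] [FiniteDimensional K E]
    (A : E ≃L[K] E) {S : Submodule K E} (h : ∀ v ∈ S, A v ∈ S) :
    ∀ v ∈ S, A.symm v ∈ S := by
  have hmap : S.map (A : E →ₗ[K] E) = S :=
    Submodule.eq_of_le_of_finrank_eq (Submodule.map_le_iff_le_comap.2 h)
      (LinearEquiv.finrank_map_eq A.toLinearEquiv S)
  intro v hv
  rw [← hmap] at hv
  obtain ⟨u, hu, rfl⟩ := hv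
  simpa using hu

section Iterate

variable {𝕜 E : Type*} [NontriviallyNormedField 𝕜] [NormedAddCommGroup E] [NormedSpace 𝕜 E]

theorem hasFDerivAt_iterate_of_eqOn {g : E → E} {B : E →L[𝕜] E} {V : Set E} (hV : IsOpen V)
    (hlin : Set.EqOn g B V) {z : E} :
    ∀ {k : ℕ}, (∀ i < k, g^[i] z ∈ V) → HasFDerivAt (g^[k]) (B ^ k) z
  | 0, _ => by simpa [ContinuousLinearMap.one_def] using hasFDerivAt_id z
  | k + 1, hz => by
    have hg : HasFDerivAt g B (g^[k] z) :=
      B.hasFDerivAt.congr_of_eventuallyEq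
        (hlin.eventuallyEq_of_mem (hV.mem_nhds (hz k k.lt_succ_self)))
    rw [Function.iterate_succ', pow_succ']
    exact hg.comp z (hasFDerivAt_iterate_of_eqOn hV hlin fun i hi => hz i (by omega))

end Iterate

theorem HyperbolicSplitting.exists_uniform_bounds {d : ℕ} {B : EucE d →L[ℝ] EucE d}
    {Es Eu : Submodule ℝ (EucE d)} (h : HyperbolicSplitting B Es Eu) :
    ∃ C > 0, (∀ n : ℕ, ∀ v ∈ Es, ‖(B ^ n) v‖ ≤ C * ‖v‖) ∧
      (∀ n : ℕ, ∀ v ∈ Eu, ‖v‖ ≤ C * ‖(B ^ n) v‖) := by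
  obtain ⟨-, -, -, C, hC, κ, hκ, hs, hu⟩ := h
  have hκn : ∀ n : ℕ, C * κ ^ n ≤ C := fun n =>
    mul_le_of_le_one_right hC.le (pow_le_one₀ hκ.1.le hκ.2.le)
  refine ⟨C, hC, fun n v hv => ?_, fun n v hv => ?_⟩
  · exact (hs n v hv).trans (mul_le_mul_of_nonneg_right (hκn n) (norm_nonneg _))
  · exact (hu n v hv).trans (mul_le_mul_of_nonneg_right (hκn n) (norm_nonneg _))

theorem HyperbolicSplitting.symm {d : ℕ} {A : EucE d ≃L[ℝ] EucE d}
    {Es Eu : Submodule ℝ (EucE d)} (h : HyperbolicSplitting (A : EucE d →L[ℝ] EucE d) Es Eu) :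
    HyperbolicSplitting (A.symm : EucE d →L[ℝ] EucE d) Eu Es := by
  obtain ⟨hcompl, hEs, hEu, C, hC, κ, hκ, hs, hu⟩ := h
  have hEs' := A.symm_apply_mem_of_forall_apply_mem hEs
  have hEu' := A.symm_apply_mem_of_forall_apply_mem hEu
  refine ⟨hcompl.symm, hEu', hEs', C, hC, κ, hκ, fun n v hv => ?_, fun n v hv => ?_⟩
  · simpa only [A.pow_apply_symm_pow_apply] using
      hu n _ (ContinuousLinearMap.pow_apply_mem (B := (A.symm : EucE d →L[ℝ] EucE d)) hEu' n hv)
  · simpa only [A.pow_apply_symm_pow_apply] using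
      hs n _ (ContinuousLinearMap.pow_apply_mem (B := (A.symm : EucE d →L[ℝ] EucE d)) hEs' n hv)

section SubNorm

variable {d : ℕ} {T : EucE d →L[ℝ] EucE d} {S : Submodule ℝ (EucE d)}

theorem subNorm_nonneg : 0 ≤ subNorm T S := norm_nonneg (T.comp S.subtypeL)

theorem norm_apply_le_subNorm {v : EucE d} (hv : v ∈ S) : ‖T v‖ ≤ subNorm T S * ‖v‖ :=
  (T.comp S.subtypeL).le_opNorm ⟨v, hv⟩

theorem one_le_mul_subNorm {C : ℝ} {v : EucE d} (hv : v ∈ S) (hv0 : v ≠ 0)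
    (h : ‖v‖ ≤ C * ‖T v‖) : 1 ≤ C * subNorm T S := by
  have hpos : 0 < ‖v‖ := norm_pos_iff.2 hv0
  have hC : 0 ≤ C := by nlinarith [norm_nonneg (T v)]
  refine le_of_mul_le_mul_right ?_ hpos
  calc 1 * ‖v‖ ≤ C * ‖T v‖ := by rwa [one_mul]
    _ ≤ C * (subNorm T S * ‖v‖) := by gcongr; exact norm_apply_le_subNorm hv
    _ = C * subNorm T S * ‖v‖ := by ring

end SubNorm

theorem norm_sub_smul_sq {F : Type*} [NormedAddCommGroup F] [InnerProductSpace ℝ F] {e : F}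
    (he : ‖e‖ = 1) (v : F) (t : ℝ) :
    ‖v - t • e‖ ^ 2 = ‖v - inner ℝ v e • e‖ ^ 2 + (inner ℝ v e - t) ^ 2 := by
  simp only [norm_sub_sq_real, real_inner_smul_right, norm_smul, Real.norm_eq_abs, he, mul_one,
    sq_abs]
  ring

section Angle

variable {d : ℕ}

theorem angS_nonneg (v : EucE d) (S : Submodule ℝ (EucE d)) : 0 ≤ angS v S :=
  Real.sInf_nonneg fun _ ⟨_, _, _, ha⟩ => ha ▸ abs_nonneg _

theorem angS_le_ang {v e : EucE d} {S : Submodule ℝ (EucE d)} (he : e ∈ S) (he1 : ‖e‖ = 1) :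
    angS v S ≤ ang v e :=
  csInf_le ⟨0, fun _ ⟨_, _, _, ha⟩ => ha ▸ abs_nonneg _⟩ ⟨e, he, he1, rfl⟩

/-- Since `Real.tan (π / 2) = 0` and `x / 0 = 0`, this also holds when `v ⟂ e` or `v = 0`. -/
theorem ang_eq_of_norm_eq_one {e : EucE d} (he : ‖e‖ = 1) (v : EucE d) :
    ang v e = ‖v - inner ℝ v e • e‖ / |inner ℝ v e| := by
  rw [ang, he, mul_one, Real.tan_arccos]
  rcases eq_or_ne v 0 with rfl | hv
  · simp
  have hv' : ‖v‖ ≠ 0 := norm_ne_zero_iff.2 hv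
  have hpyth : ‖v‖ ^ 2 = ‖v - inner ℝ v e • e‖ ^ 2 + inner ℝ v e ^ 2 := by
    simpa using norm_sub_smul_sq he v 0
  have hsq : 1 - (inner ℝ v e / ‖v‖) ^ 2 = (‖v - inner ℝ v e • e‖ / ‖v‖) ^ 2 := by
    field_simp
    linarith
  rw [hsq, Real.sqrt_sq (by positivity), div_div_div_cancel_right₀ hv', abs_div, abs_norm]

theorem norm_mul_min_ang_le {e : EucE d} (he : ‖e‖ = 1) (v : EucE d) (t : ℝ) :
    ‖v‖ * min (ang v e) 1 ≤ √2 * ‖v - t • e‖ := by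
  set α := inner ℝ v e
  set β := ‖v - α • e‖
  set m := min (ang v e) 1
  have hm0 : 0 ≤ m := le_min (abs_nonneg _) zero_le_one
  have hm1 : m ≤ 1 := min_le_right _ _
  have hαm : |α| * m ≤ β := by
    rcases eq_or_ne α 0 with hα | hα
    · simp [hα, β]
    calc |α| * m ≤ |α| * (β / |α|) := by
          gcongr
          exact (min_le_left _ _).trans_eq (ang_eq_of_norm_eq_one he v)
      _ = β := mul_div_cancel₀ _ (abs_ne_zero.2 hα)
  have hpyth : ‖v‖ ^ 2 = β ^ 2 + α ^ 2 := by simpa using norm_sub_smul_sq he v 0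
  have hβ : β ≤ ‖v - t • e‖ := by
    rw [← sq_le_sq₀ (norm_nonneg _) (norm_nonneg _), norm_sub_smul_sq he v t]
    nlinarith
  -- `‖v‖² m² = (|α| m)² + β² m² ≤ 2 β²`
  have hkey : (‖v‖ * m) ^ 2 ≤ (√2 * β) ^ 2 := by
    rw [mul_pow, mul_pow, Real.sq_sqrt zero_le_two, hpyth, ← sq_abs α]
    have hm2 : m ^ 2 ≤ 1 := pow_le_one₀ hm0 hm1
    nlinarith [mul_le_mul hαm hαm (by positivity) (norm_nonneg _), sq_nonneg β]
  calc ‖v‖ * m ≤ √2 * β := (sq_le_sq₀ (by positivity) (by positivity)).1 hkey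
    _ ≤ √2 * ‖v - t • e‖ := by gcongr

theorem norm_mul_min_angS_le {S : Submodule ℝ (EucE d)} {v y : EucE d} (hy : y ∈ S) :
    ‖v‖ * min (angS v S) 1 ≤ √2 * ‖v - y‖ := by
  rcases eq_or_ne y 0 with rfl | hy0
  · rw [sub_zero]
    calc ‖v‖ * min (angS v S) 1 ≤ 1 * ‖v‖ := by
          rw [one_mul]; exact mul_le_of_le_one_right (norm_nonneg v) (min_le_right _ _)
      _ ≤ √2 * ‖v‖ := by gcongr; exact Real.one_le_sqrt.2 one_le_two
  set e : EucE d := ‖y‖⁻¹ • y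
  have he : ‖e‖ = 1 := norm_smul_inv_norm (𝕜 := ℝ) hy0
  have hye : y = ‖y‖ • e := by simp [e, smul_smul, norm_ne_zero_iff.2 hy0]
  calc ‖v‖ * min (angS v S) 1 ≤ ‖v‖ * min (ang v e) 1 := by
        gcongr; exact angS_le_ang (S.smul_mem _ hy) he
    _ ≤ √2 * ‖v - y‖ := by
        rw [hye]; exact norm_mul_min_ang_le he v ‖y‖

end Angle

section Estimates

variable {d : ℕ} {Es Eu : Submodule ℝ (EucE d)}

theorem exists_norm_mul_min_angS_le_subNorm (h : IsCompl Es Eu) :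
    ∃ c > 0, ∀ T : EucE d →L[ℝ] EucE d, (∀ v ∈ Eu, T v ∈ Eu) → ∀ w : EucE d,
      ‖T w‖ * min (angS (T w) Eu) 1 ≤ c * subNorm T Es * ‖w‖ := by
  obtain ⟨c, hc, hdec⟩ := exists_bounded_decomposition_of_isCompl h
  refine ⟨√2 * c, by positivity, fun T hT w => ?_⟩
  obtain ⟨x, hx, y, hy, rfl, hxw, -⟩ := hdec w
  calc ‖T (x + y)‖ * min (angS (T (x + y)) Eu) 1 ≤ √2 * ‖T (x + y) - T y‖ :=
        norm_mul_min_angS_le (hT y hy)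
    _ = √2 * ‖T x‖ := by rw [map_add, add_sub_cancel_right]
    _ ≤ √2 * (subNorm T Es * (c * ‖x + y‖)) := by
        gcongr
        exact (norm_apply_le_subNorm hx).trans (by gcongr; exact subNorm_nonneg)
    _ = √2 * c * subNorm T Es * ‖x + y‖ := by ring

theorem HyperbolicSplitting.exists_norm_pow_apply_le_subNorm {B : EucE d →L[ℝ] EucE d}
    (h : HyperbolicSplitting B Es Eu) :
    ∃ K > 0, ∀ (k : ℕ) (v : EucE d), v ∉ Es → ‖(B ^ k) v‖ ≤ K * subNorm (B ^ k) Eu * ‖v‖ := by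
  obtain ⟨c, hc, hdec⟩ := exists_bounded_decomposition_of_isCompl h.1
  obtain ⟨C, hC, hcontr, hexp⟩ := h.exists_uniform_bounds
  refine ⟨c * (C ^ 2 + 1), by positivity, fun k v hv => ?_⟩
  obtain ⟨x, hx, y, hy, rfl, hxv, hyv⟩ := hdec v
  have hy0 : y ≠ 0 := by
    rintro rfl
    exact hv (by simpa using hx)
  set s := subNorm (B ^ k) Eu
  have hs0 : 0 ≤ s := subNorm_nonneg
  have hs : 1 ≤ C * s := one_le_mul_subNorm hy hy0 (hexp k y hy)
  calc ‖(B ^ k) (x + y)‖ ≤ C * ‖x‖ + s * ‖y‖ := by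
        rw [map_add]
        exact (norm_add_le _ _).trans (add_le_add (hcontr k x hx) (norm_apply_le_subNorm hy))
    _ ≤ C * (C * s) * ‖x‖ + s * ‖y‖ := by gcongr; nlinarith
    _ ≤ C ^ 2 * s * (c * ‖x + y‖) + s * (c * ‖x + y‖) := by
        rw [← mul_assoc, ← sq]; gcongr
    _ = c * (C ^ 2 + 1) * s * ‖x + y‖ := by ring

theorem HyperbolicSplitting.exists_angle_norm_estimates {A : EucE d ≃L[ℝ] EucE d}
    (hA : HyperbolicSplitting (A : EucE d →L[ℝ] EucE d) Es Eu) :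
    ∃ K₆ > (0 : ℝ), ∃ K₇ > (0 : ℝ), ∀ (k : ℕ) (v : EucE d), v ∉ Eu →
      K₆ * (subNorm ((A : EucE d →L[ℝ] EucE d) ^ k) Es)⁻¹ * ‖v‖ * min (angS v Eu) 1 ≤
          ‖((A.symm : EucE d →L[ℝ] EucE d) ^ k) v‖ ∧
        ‖((A.symm : EucE d →L[ℝ] EucE d) ^ k) v‖ ≤
          K₇ * subNorm ((A.symm : EucE d →L[ℝ] EucE d) ^ k) Es * ‖v‖ := by
  obtain ⟨c, hc, hlow⟩ := exists_norm_mul_min_angS_le_subNorm hA.1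
  obtain ⟨K, hK, hup⟩ := hA.symm.exists_norm_pow_apply_le_subNorm
  refine ⟨c⁻¹, inv_pos.2 hc, K, hK, fun k v hv => ⟨?_, hup k v hv⟩⟩
  have hEu : ∀ u ∈ Eu, (A : EucE d →L[ℝ] EucE d) u ∈ Eu := hA.2.2.1
  have h := hlow _ (fun _ ↦ ContinuousLinearMap.pow_apply_mem hEu k)
    (((A.symm : EucE d →L[ℝ] EucE d) ^ k) v)
  rw [A.pow_apply_symm_pow_apply] at h
  set s := subNorm ((A : EucE d →L[ℝ] EucE d) ^ k) Es
  have hs0 : 0 ≤ s := subNorm_nonneg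
  rcases hs0.eq_or_lt with hs | hs
  · simp [← hs]
  · calc c⁻¹ * s⁻¹ * ‖v‖ * min (angS v Eu) 1 = (c * s)⁻¹ * (‖v‖ * min (angS v Eu) 1) := by ring
      _ ≤ _ := (inv_mul_le_iff₀ (by positivity)).2 h

end Estimates

section LocallyLinear

variable {𝕜 E : Type*} [NontriviallyNormedField 𝕜] [NormedAddCommGroup E] [NormedSpace 𝕜 E]
  {g ginv : E → E} {A : E ≃L[𝕜] E} {V : Set E} {z : E} {k : ℕ}

theorem fderiv_iterate_eq_pow_of_eqOn (hV : IsOpen V) (hlin : Set.EqOn g A V)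
    (hig : Function.LeftInverse g ginv) (hz : z ∈ ⋂ j ∈ Finset.range (k + 1), ginv^[j] '' V) :
    fderiv 𝕜 (g^[k]) z = (A : E →L[𝕜] E) ^ k := by
  refine (hasFDerivAt_iterate_of_eqOn (B := (A : E →L[𝕜] E)) hV hlin fun i hi => ?_).fderiv
  obtain ⟨y, hy, rfl⟩ := Set.mem_iInter₂.1 hz i (Finset.mem_range.2 (by omega))
  rwa [hig.iterate i y]

theorem fderiv_iterate_inv_eq_symm_pow_of_eqOn (hV : IsOpen V) (hlin : Set.EqOn g A V)
    (hgi : Function.LeftInverse ginv g) (hz : z ∈ ⋂ j ∈ Finset.range (k + 1), g^[j] '' V) :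
    fderiv 𝕜 (ginv^[k]) z = (A.symm : E →L[𝕜] E) ^ k := by
  have hlin' : Set.EqOn ginv (A.symm : E →L[𝕜] E) (A '' V) := by
    rintro _ ⟨y, hy, rfl⟩
    simp only [ContinuousLinearEquiv.coe_coe, A.symm_apply_apply]
    rw [← hlin hy, hgi y]
  refine (hasFDerivAt_iterate_of_eqOn (A.isOpenMap V hV) hlin' fun i hi => ?_).fderiv
  obtain ⟨y, hy, rfl⟩ := Set.mem_iInter₂.1 hz (i + 1) (Finset.mem_range.2 (by omega))
  rw [Function.iterate_succ_apply, hgi.iterate i]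
  exact ⟨y, hy, (hlin hy).symm⟩

end LocallyLinear

section Statement

variable {d : ℕ} {M : Type*} [MetricSpace M] [CompactSpace M]
  [ChartedSpace (EucE d) M] [IsManifold (𝓡 d) ((⊤ : ℕ∞) : WithTop ℕ∞) M]
  [MeasurableSpace M] [BorelSpace M]
theorem angle_norm_estimates_linear_hyperbolic_general (n : ℕ)
    (g ginv : EucE (2 * n) → EucE (2 * n))
    (hgi : Function.LeftInverse ginv g) (hig : Function.RightInverse ginv g)
    (V : Set (EucE (2 * n))) (hV : IsOpen V)
    (A : EucE (2 * n) ≃L[ℝ] EucE (2 * n))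
    (Es Eu : Submodule ℝ (EucE (2 * n)))
    (hA : HyperbolicSplitting (A : EucE (2 * n) →L[ℝ] EucE (2 * n)) Es Eu)
    (hlin : ∀ x ∈ V, g x = A x) :
    ∃ K₆ > (0 : ℝ), ∃ K₇ > (0 : ℝ), ∀ k : ℕ,
      (∀ z ∈ ⋂ j ∈ Finset.range (k + 1), (g^[j]) '' V,
        ∀ v : EucE (2 * n), v ∉ Eu →
          1 ≤ angS (fderiv ℝ (ginv^[k]) z v) Eu →
          K₆ * (subNorm ((A : EucE (2 * n) →L[ℝ] EucE (2 * n)) ^ k) Es)⁻¹ * ‖v‖ *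
              min (angS v Eu) 1 ≤ ‖fderiv ℝ (ginv^[k]) z v‖ ∧
            ‖fderiv ℝ (ginv^[k]) z v‖ ≤
              K₇ * subNorm ((A.symm : EucE (2 * n) →L[ℝ] EucE (2 * n)) ^ k) Es * ‖v‖) ∧
      (∀ z ∈ ⋂ j ∈ Finset.range (k + 1), (ginv^[j]) '' V,
        ∀ v : EucE (2 * n), v ∉ Es →
          1 ≤ angS (fderiv ℝ (g^[k]) z v) Es →
          K₆ * (subNorm ((A.symm : EucE (2 * n) →L[ℝ] EucE (2 * n)) ^ k) Eu)⁻¹ * ‖v‖ *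
              min (angS v Es) 1 ≤ ‖fderiv ℝ (g^[k]) z v‖ ∧
            ‖fderiv ℝ (g^[k]) z v‖ ≤
              K₇ * subNorm ((A : EucE (2 * n) →L[ℝ] EucE (2 * n)) ^ k) Eu * ‖v‖) := by
  obtain ⟨K₆, hK₆, K₇, hK₇, hu⟩ := hA.exists_angle_norm_estimates
  obtain ⟨K₆', hK₆', K₇', hK₇', hs⟩ := hA.symm.exists_angle_norm_estimates
  simp only [ContinuousLinearEquiv.symm_symm] at hs
  refine ⟨min K₆ K₆', lt_min hK₆ hK₆', max K₇ K₇', lt_max_of_lt_left hK₇,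
    fun k => ⟨fun z hz v hv _ => ?_, fun z hz v hv _ => ?_⟩⟩
  · rw [fderiv_iterate_inv_eq_symm_pow_of_eqOn hV hlin hgi hz]
    obtain ⟨hlow, hup⟩ := hu k v hv
    refine ⟨le_trans ?_ hlow, hup.trans ?_⟩ <;> gcongr <;> simp [subNorm_nonneg, angS_nonneg]
  · rw [fderiv_iterate_eq_pow_of_eqOn hV hlin hig hz]
    obtain ⟨hlow, hup⟩ := hs k v hv
    refine ⟨le_trans ?_ hlow, hup.trans ?_⟩ <;> gcongr <;> simp [subNorm_nonneg, angS_nonneg]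

/-- (Angle–norm estimates for a locally linear hyperbolic fixed point.)
In local coordinates on a neighborhood `V` of a hyperbolic fixed point `p₁` of `g`, where `g`
coincides with the hyperbolic linear map `A = Dg(p₁)` with splitting `E^s ⊕ E^u` of `ℝ^{2n}`,
there are constants `K₆, K₇ > 0` such that for every `k`:
(1) for `z ∈ V ∩ g(V) ∩ … ∩ g^k(V)` and `v ∉ E^u` with `ang(Dg^{-k}(z)v, E^u) ≥ 1`,
`K₆ ‖A^k|E^s‖⁻¹ ‖v‖ min{ang(v,E^u),1} ≤ ‖Dg^{-k}(z)v‖ ≤ K₇ ‖A^{-k}|E^s‖ ‖v‖`;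
(2) symmetrically for `z ∈ V ∩ g^{-1}(V) ∩ … ∩ g^{-k}(V)` and `v ∉ E^s`. -/
theorem angle_norm_estimates_linear_hyperbolic (n : ℕ)
    (g ginv : EucE (2 * n) → EucE (2 * n))
    (hgi : Function.LeftInverse ginv g) (hig : Function.RightInverse ginv g)
    (V : Set (EucE (2 * n))) (hV : IsOpen V)
    (p₁ : EucE (2 * n)) (hp₁ : p₁ ∈ V) (hfix : g p₁ = p₁)
    (A : EucE (2 * n) ≃L[ℝ] EucE (2 * n))
    (Es Eu : Submodule ℝ (EucE (2 * n)))
    (hA : HyperbolicSplitting (A : EucE (2 * n) →L[ℝ] EucE (2 * n)) Es Eu)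
    (hlin : ∀ x ∈ V, g x = A x) :
    ∃ K₆ > (0 : ℝ), ∃ K₇ > (0 : ℝ), ∀ k : ℕ,
      (∀ z ∈ ⋂ j ∈ Finset.range (k + 1), (g^[j]) '' V,
        ∀ v : EucE (2 * n), v ∉ Eu →
          1 ≤ angS (fderiv ℝ (ginv^[k]) z v) Eu →
          K₆ * (subNorm ((A : EucE (2 * n) →L[ℝ] EucE (2 * n)) ^ k) Es)⁻¹ * ‖v‖ *
              min (angS v Eu) 1 ≤ ‖fderiv ℝ (ginv^[k]) z v‖ ∧
            ‖fderiv ℝ (ginv^[k]) z v‖ ≤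
              K₇ * subNorm ((A.symm : EucE (2 * n) →L[ℝ] EucE (2 * n)) ^ k) Es * ‖v‖) ∧
      (∀ z ∈ ⋂ j ∈ Finset.range (k + 1), (ginv^[j]) '' V,
        ∀ v : EucE (2 * n), v ∉ Es →
          1 ≤ angS (fderiv ℝ (g^[k]) z v) Es →
          K₆ * (subNorm ((A.symm : EucE (2 * n) →L[ℝ] EucE (2 * n)) ^ k) Eu)⁻¹ * ‖v‖ *
              min (angS v Es) 1 ≤ ‖fderiv ℝ (g^[k]) z v‖ ∧
            ‖fderiv ℝ (g^[k]) z v‖ ≤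
              K₇ * subNorm ((A : EucE (2 * n) →L[ℝ] EucE (2 * n)) ^ k) Eu * ‖v‖) :=
  angle_norm_estimates_linear_hyperbolic_general n g ginv hgi hig V hV A Es Eu hA hlin

end Statement
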